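/- Generalized ties in the tied pseudo braid monoid are idempotent and pairwise commute: for every n ≥ 2 and all indices 1 ≤ i < j ≤ n and 1 ≤ k < l ≤ n, the equalities η_{i,j} η_{i,j} = η_{i,j} and η_{i,j} η_{k,l} = η_{k,l} η_{i,j} hold in the tied pseudo braid monoid TPM_n. -/

import Mathlib

/-!
The tied pseudo braid monoid `TPM n` (n ≥ 2), presented by generators
σ_1,…,σ_{n−1}, σ_1⁻¹,…,σ_{n−1}⁻¹, p_1,…,p_{n−1}, η_1,…,η_{n−1} subject to the
relations listed in the inductive `TPMRel` below.
-/

/-- Generators of the tied pseudo braid monoid: σ_i, σ_i⁻¹, p_i and η_i for 1 ≤ i ≤ n−1. -/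
inductive TPMGen (n : ℕ) : Type
  | sig (i : ℕ) (h : 1 ≤ i ∧ i ≤ n - 1) : TPMGen n
  | sigInv (i : ℕ) (h : 1 ≤ i ∧ i ≤ n - 1) : TPMGen n
  | p (i : ℕ) (h : 1 ≤ i ∧ i ≤ n - 1) : TPMGen n
  | eta (i : ℕ) (h : 1 ≤ i ∧ i ≤ n - 1) : TPMGen n

/-- The word σ_i in the free monoid on the generators. -/
def wS (n i : ℕ) : FreeMonoid (TPMGen n) :=
  if h : 1 ≤ i ∧ i ≤ n - 1 then FreeMonoid.of (TPMGen.sig i h) else 1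

/-- The word σ_i⁻¹ in the free monoid on the generators. -/
def wSI (n i : ℕ) : FreeMonoid (TPMGen n) :=
  if h : 1 ≤ i ∧ i ≤ n - 1 then FreeMonoid.of (TPMGen.sigInv i h) else 1

/-- The word p_i in the free monoid on the generators. -/
def wP (n i : ℕ) : FreeMonoid (TPMGen n) :=
  if h : 1 ≤ i ∧ i ≤ n - 1 then FreeMonoid.of (TPMGen.p i h) else 1

/-- The word η_i in the free monoid on the generators. -/
def wE (n i : ℕ) : FreeMonoid (TPMGen n) :=
  if h : 1 ≤ i ∧ i ≤ n - 1 then FreeMonoid.of (TPMGen.eta i h) else 1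

/-- The defining relations of the tied pseudo braid monoid `TPM n`. -/
inductive TPMRel (n : ℕ) : FreeMonoid (TPMGen n) → FreeMonoid (TPMGen n) → Prop
  /- σ_i σ_i⁻¹ = σ_i⁻¹ σ_i = 1 -/
  | inv_right (i : ℕ) (h : 1 ≤ i ∧ i ≤ n - 1) :
      TPMRel n (wS n i * wSI n i) 1
  | inv_left (i : ℕ) (h : 1 ≤ i ∧ i ≤ n - 1) :
      TPMRel n (wSI n i * wS n i) 1
  /- σ_i σ_{i+1} σ_i = σ_{i+1} σ_i σ_{i+1} -/
  | braid (i : ℕ) (h : 1 ≤ i ∧ i + 1 ≤ n - 1) :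
      TPMRel n (wS n i * wS n (i+1) * wS n i) (wS n (i+1) * wS n i * wS n (i+1))
  /- σ_i σ_j = σ_j σ_i for |i−j| ≥ 2 -/
  | sig_comm (i j : ℕ) (hi : 1 ≤ i ∧ i ≤ n - 1) (hj : 1 ≤ j ∧ j ≤ n - 1)
      (hij : i + 2 ≤ j ∨ j + 2 ≤ i) :
      TPMRel n (wS n i * wS n j) (wS n j * wS n i)
  /- p_i p_j = p_j p_i for |i−j| ≥ 2 -/
  | p_comm (i j : ℕ) (hi : 1 ≤ i ∧ i ≤ n - 1) (hj : 1 ≤ j ∧ j ≤ n - 1)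
      (hij : i + 2 ≤ j ∨ j + 2 ≤ i) :
      TPMRel n (wP n i * wP n j) (wP n j * wP n i)
  /- p_i σ_j^{±1} = σ_j^{±1} p_i for |i−j| ≥ 2 -/
  | p_sig_far_pos (i j : ℕ) (hi : 1 ≤ i ∧ i ≤ n - 1) (hj : 1 ≤ j ∧ j ≤ n - 1)
      (hij : i + 2 ≤ j ∨ j + 2 ≤ i) :
      TPMRel n (wP n i * wS n j) (wS n j * wP n i)
  | p_sig_far_neg (i j : ℕ) (hi : 1 ≤ i ∧ i ≤ n - 1) (hj : 1 ≤ j ∧ j ≤ n - 1)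
      (hij : i + 2 ≤ j ∨ j + 2 ≤ i) :
      TPMRel n (wP n i * wSI n j) (wSI n j * wP n i)
  /- p_i σ_i^{±1} = σ_i^{±1} p_i -/
  | p_sig_pos (i : ℕ) (h : 1 ≤ i ∧ i ≤ n - 1) :
      TPMRel n (wP n i * wS n i) (wS n i * wP n i)
  | p_sig_neg (i : ℕ) (h : 1 ≤ i ∧ i ≤ n - 1) :
      TPMRel n (wP n i * wSI n i) (wSI n i * wP n i)
  /- σ_i σ_{i+1} p_i = p_{i+1} σ_i σ_{i+1} -/
  | ssp (i : ℕ) (h : 1 ≤ i ∧ i + 1 ≤ n - 1) :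
      TPMRel n (wS n i * wS n (i+1) * wP n i) (wP n (i+1) * wS n i * wS n (i+1))
  /- σ_{i+1} σ_i p_{i+1} = p_i σ_{i+1} σ_i -/
  | ssp' (i : ℕ) (h : 1 ≤ i ∧ i + 1 ≤ n - 1) :
      TPMRel n (wS n (i+1) * wS n i * wP n (i+1)) (wP n i * wS n (i+1) * wS n i)
  /- η_i η_j = η_j η_i for all i, j -/
  | eta_comm (i j : ℕ) (hi : 1 ≤ i ∧ i ≤ n - 1) (hj : 1 ≤ j ∧ j ≤ n - 1) :
      TPMRel n (wE n i * wE n j) (wE n j * wE n i)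
  /- η_i σ_i = σ_i η_i -/
  | eta_sig (i : ℕ) (h : 1 ≤ i ∧ i ≤ n - 1) :
      TPMRel n (wE n i * wS n i) (wS n i * wE n i)
  /- η_i σ_j = σ_j η_i for |i−j| ≥ 2 -/
  | eta_sig_far (i j : ℕ) (hi : 1 ≤ i ∧ i ≤ n - 1) (hj : 1 ≤ j ∧ j ≤ n - 1)
      (hij : i + 2 ≤ j ∨ j + 2 ≤ i) :
      TPMRel n (wE n i * wS n j) (wS n j * wE n i)
  /- η_i σ_j σ_i^ε = σ_j σ_i^ε η_j for |i−j| = 1, ε = ±1 -/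
  | eta_slide_pos (i j : ℕ) (hi : 1 ≤ i ∧ i ≤ n - 1) (hj : 1 ≤ j ∧ j ≤ n - 1)
      (hij : j = i + 1 ∨ i = j + 1) :
      TPMRel n (wE n i * wS n j * wS n i) (wS n j * wS n i * wE n j)
  | eta_slide_neg (i j : ℕ) (hi : 1 ≤ i ∧ i ≤ n - 1) (hj : 1 ≤ j ∧ j ≤ n - 1)
      (hij : j = i + 1 ∨ i = j + 1) :
      TPMRel n (wE n i * wS n j * wSI n i) (wS n j * wSI n i * wE n j)
  /- η_i η_j σ_i = η_j σ_i η_j = σ_i η_i η_j for |i−j| = 1 -/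
  | eta_eta_sig₁ (i j : ℕ) (hi : 1 ≤ i ∧ i ≤ n - 1) (hj : 1 ≤ j ∧ j ≤ n - 1)
      (hij : j = i + 1 ∨ i = j + 1) :
      TPMRel n (wE n i * wE n j * wS n i) (wE n j * wS n i * wE n j)
  | eta_eta_sig₂ (i j : ℕ) (hi : 1 ≤ i ∧ i ≤ n - 1) (hj : 1 ≤ j ∧ j ≤ n - 1)
      (hij : j = i + 1 ∨ i = j + 1) :
      TPMRel n (wE n j * wS n i * wE n j) (wS n i * wE n i * wE n j)
  /- η_i² = η_i -/
  | eta_idem (i : ℕ) (h : 1 ≤ i ∧ i ≤ n - 1) :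
      TPMRel n (wE n i * wE n i) (wE n i)
  /- p_i η_i = η_i p_i -/
  | p_eta (i : ℕ) (h : 1 ≤ i ∧ i ≤ n - 1) :
      TPMRel n (wP n i * wE n i) (wE n i * wP n i)
  /- p_i η_j = η_j p_i for |i−j| ≥ 2 -/
  | p_eta_far (i j : ℕ) (hi : 1 ≤ i ∧ i ≤ n - 1) (hj : 1 ≤ j ∧ j ≤ n - 1)
      (hij : i + 2 ≤ j ∨ j + 2 ≤ i) :
      TPMRel n (wP n i * wE n j) (wE n j * wP n i)
  /- η_i p_j p_i = p_j p_i η_j for |i−j| = 1 -/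
  | eta_pp (i j : ℕ) (hi : 1 ≤ i ∧ i ≤ n - 1) (hj : 1 ≤ j ∧ j ≤ n - 1)
      (hij : j = i + 1 ∨ i = j + 1) :
      TPMRel n (wE n i * wP n j * wP n i) (wP n j * wP n i * wE n j)
  /- η_i η_j p_i = η_j p_i η_j = p_i η_i η_j for |i−j| = 1 -/
  | eta_eta_p₁ (i j : ℕ) (hi : 1 ≤ i ∧ i ≤ n - 1) (hj : 1 ≤ j ∧ j ≤ n - 1)
      (hij : j = i + 1 ∨ i = j + 1) :
      TPMRel n (wE n i * wE n j * wP n i) (wE n j * wP n i * wE n j)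
  | eta_eta_p₂ (i j : ℕ) (hi : 1 ≤ i ∧ i ≤ n - 1) (hj : 1 ≤ j ∧ j ≤ n - 1)
      (hij : j = i + 1 ∨ i = j + 1) :
      TPMRel n (wE n j * wP n i * wE n j) (wP n i * wE n i * wE n j)
  /- η_i p_j σ_i = p_j σ_i η_j for |i−j| = 1 -/
  | eta_ps (i j : ℕ) (hi : 1 ≤ i ∧ i ≤ n - 1) (hj : 1 ≤ j ∧ j ≤ n - 1)
      (hij : j = i + 1 ∨ i = j + 1) :
      TPMRel n (wE n i * wP n j * wS n i) (wP n j * wS n i * wE n j)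
  /- η_i σ_j p_i = σ_j p_i η_j for |i−j| = 1 -/
  | eta_sp (i j : ℕ) (hi : 1 ≤ i ∧ i ≤ n - 1) (hj : 1 ≤ j ∧ j ≤ n - 1)
      (hij : j = i + 1 ∨ i = j + 1) :
      TPMRel n (wE n i * wS n j * wP n i) (wS n j * wP n i * wE n j)
  /- p_i η_j = σ_i η_j σ_i⁻¹ p_i for |i−j| = 1 -/
  | p_eta_conj (i j : ℕ) (hi : 1 ≤ i ∧ i ≤ n - 1) (hj : 1 ≤ j ∧ j ≤ n - 1)
      (hij : j = i + 1 ∨ i = j + 1) :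
      TPMRel n (wP n i * wE n j) (wS n i * wE n j * wSI n i * wP n i)

/-- The tied pseudo braid monoid `TPM n`: the quotient of the free monoid on the
generators by the congruence generated by the defining relations. -/
def TPM (n : ℕ) := (conGen (TPMRel n)).Quotient

instance (n : ℕ) : Monoid (TPM n) :=
  inferInstanceAs (Monoid ((conGen (TPMRel n)).Quotient))

/-- The generator σ_i of `TPM n` (defined for 1 ≤ i ≤ n−1; junk value 1 otherwise). -/
def TPM.s (n i : ℕ) : TPM n := (conGen (TPMRel n)).mk' (wS n i)

/-- The generator σ_i⁻¹ of `TPM n` (defined for 1 ≤ i ≤ n−1; junk value 1 otherwise). -/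
def TPM.sInv (n i : ℕ) : TPM n := (conGen (TPMRel n)).mk' (wSI n i)

/-- The generator p_i of `TPM n` (defined for 1 ≤ i ≤ n−1; junk value 1 otherwise). -/
def TPM.p (n i : ℕ) : TPM n := (conGen (TPMRel n)).mk' (wP n i)

/-- The generator η_i of `TPM n` (defined for 1 ≤ i ≤ n−1; junk value 1 otherwise). -/
def TPM.e (n i : ℕ) : TPM n := (conGen (TPMRel n)).mk' (wE n i)

/-- The generalized tie η_{i,j} = σ_i σ_{i+1} ⋯ σ_{j−2} η_{j−1} σ_{j−2}⁻¹ ⋯ σ_{i+1}⁻¹ σ_i⁻¹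
in `TPM n`, for 1 ≤ i < j ≤ n (in particular η_{i,i+1} = η_i). -/
def TPM.genTie (n i j : ℕ) : TPM n :=
  (((List.range' i (j - 1 - i)).map (TPM.s n)).prod) * TPM.e n (j - 1) *
    (((List.range' i (j - 1 - i)).reverse.map (TPM.sInv n)).prod)

/-!
Conjugation by σ_k permutes the generalized ties as the transposition τ = (k k+1) permutes their
endpoints: σ_k η_{a,b} σ_k⁻¹ = η_{τa,τb}, except for η_k = η_{k,k+1} (whose endpoints τ would
reverse), which commutes with σ_k. This is proved by induction on b − a; the local input is the
relations η_i σ_j σ_i^{±1} = σ_j σ_i^{±1} η_j for |i − j| = 1, which together show that σ_i²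
commutes with η_{i+1}.

Idempotence and commutation are preserved by conjugation, and η_{a,b} is a conjugate of η_{b−1},
which gives idempotence. For commutation, conjugating by σ_a shortens η_{a,b} to η_{a+1,b}, which
reduces everything to a single η_m against a tie η_{c,d}. That tie can in turn be shortened by a
σ commuting with η_m, except for the pair η_{c+1}, η_{c,c+3}, which is the conjugate of the pair
η_{c+2}, η_c by σ_{c+2} σ_{c+1}.
-/

section Conjugation

variable {M : Type*} [Monoid M]

theorem SemiconjBy.of_mul_left {a x y z : M} {b : Mˣ} (hab : SemiconjBy (a * b) x z)
    (hb : SemiconjBy (↑b) x y) : SemiconjBy a y z := by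
  simpa only [Units.mul_inv_cancel_right] using hab.mul_left hb.units_inv_symm_left

theorem SemiconjBy.conj_units {u : Mˣ} {v v' x x' y y' : M} (hv : SemiconjBy (↑u) v v')
    (hx : SemiconjBy (↑u) x x') (hy : SemiconjBy (↑u) y y') (h : SemiconjBy v x y) :
    SemiconjBy v' x' y' := by
  have key : v' * x' * u = y' * v' * u := by
    calc v' * x' * u = v' * (u * x) := by rw [mul_assoc, ← hx.eq]
      _ = u * (v * x) := by rw [← mul_assoc, ← hv.eq, mul_assoc]
      _ = y' * v' * u := by rw [h.eq, ← mul_assoc, hy.eq, mul_assoc, hv.eq, mul_assoc]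
  exact (Units.mul_left_inj u).1 key

theorem Commute.conj_units {u : Mˣ} {x x' y y' : M} (hx : SemiconjBy (↑u) x x')
    (hy : SemiconjBy (↑u) y y') (h : Commute x y) : Commute x' y' :=
  SemiconjBy.conj_units hx hy hy h

theorem IsIdempotentElem.conj_units {u : Mˣ} {x x' : M} (hx : SemiconjBy (↑u) x x')
    (h : IsIdempotentElem x) : IsIdempotentElem x' := by
  have hx' : x' = u * x * ↑u⁻¹ := by rw [hx.eq, Units.mul_inv_cancel_right]
  rw [hx', IsIdempotentElem]
  simp only [mul_assoc, Units.inv_mul_cancel_left]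
  rw [← mul_assoc x, h.eq]

end Conjugation

theorem swap_add_one_apply_cases (k x : ℕ) :
    (x = k ∧ Equiv.swap k (k + 1) x = k + 1) ∨ (x = k + 1 ∧ Equiv.swap k (k + 1) x = k) ∨
      (x ≠ k ∧ x ≠ k + 1 ∧ Equiv.swap k (k + 1) x = x) := by
  simp only [Equiv.swap_apply_def]; split_ifs <;> omega

namespace TPM

variable {n : ℕ}

def mk : FreeMonoid (TPMGen n) →* TPM n := (conGen (TPMRel n)).mk'

theorem mk_eq_of_rel {w w' : FreeMonoid (TPMGen n)} (h : TPMRel n w w') : mk w = mk w' :=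
  (Con.eq _).2 (ConGen.Rel.of _ _ h)

@[simp] theorem mk_wS (i : ℕ) : mk (wS n i) = s n i := rfl

@[simp] theorem mk_wSI (i : ℕ) : mk (wSI n i) = sInv n i := rfl

@[simp] theorem mk_wE (i : ℕ) : mk (wE n i) = e n i := rfl

theorem s_eq_one {i : ℕ} (h : ¬(1 ≤ i ∧ i ≤ n - 1)) : s n i = 1 := by
  rw [s, wS, dif_neg h, map_one]; rfl

theorem sInv_eq_one {i : ℕ} (h : ¬(1 ≤ i ∧ i ≤ n - 1)) : sInv n i = 1 := by
  rw [sInv, wSI, dif_neg h, map_one]; rfl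

theorem e_eq_one {i : ℕ} (h : ¬(1 ≤ i ∧ i ≤ n - 1)) : e n i = 1 := by
  rw [e, wE, dif_neg h, map_one]; rfl

theorem s_mul_sInv (i : ℕ) : s n i * sInv n i = 1 := by
  by_cases h : 1 ≤ i ∧ i ≤ n - 1
  · simpa only [map_mul, map_one, mk_wS, mk_wSI] using mk_eq_of_rel (TPMRel.inv_right i h)
  · rw [s_eq_one h, sInv_eq_one h, one_mul]

theorem sInv_mul_s (i : ℕ) : sInv n i * s n i = 1 := by
  by_cases h : 1 ≤ i ∧ i ≤ n - 1
  · simpa only [map_mul, map_one, mk_wS, mk_wSI] using mk_eq_of_rel (TPMRel.inv_left i h)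
  · rw [s_eq_one h, sInv_eq_one h, one_mul]

@[simp] theorem sInv_mul_s_cancel_left (i : ℕ) (x : TPM n) : sInv n i * (s n i * x) = x := by
  rw [← mul_assoc, sInv_mul_s, one_mul]

def sUnit (n i : ℕ) : (TPM n)ˣ := ⟨s n i, sInv n i, s_mul_sInv i, sInv_mul_s i⟩

@[simp] theorem val_sUnit (i : ℕ) : (sUnit n i : TPM n) = s n i := rfl

@[simp] theorem val_inv_sUnit (i : ℕ) : ((sUnit n i)⁻¹ : (TPM n)ˣ) = sInv n i := rfl

theorem commute_e_e (i j : ℕ) : Commute (e n i) (e n j) := by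
  by_cases hi : 1 ≤ i ∧ i ≤ n - 1
  · by_cases hj : 1 ≤ j ∧ j ≤ n - 1
    · simpa only [map_mul, mk_wE, commute_iff_eq] using mk_eq_of_rel (TPMRel.eta_comm i j hi hj)
    · rw [e_eq_one hj]; exact Commute.one_right _
  · rw [e_eq_one hi]; exact Commute.one_left _

theorem isIdempotentElem_e (i : ℕ) : IsIdempotentElem (e n i) := by
  by_cases hi : 1 ≤ i ∧ i ≤ n - 1
  · simpa only [map_mul, mk_wE, IsIdempotentElem] using mk_eq_of_rel (TPMRel.eta_idem i hi)
  · rw [e_eq_one hi]; exact IsIdempotentElem.one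

theorem commute_s_e {i j : ℕ} (h₁ : j ≠ i + 1) (h₂ : i ≠ j + 1) : Commute (s n j) (e n i) := by
  by_cases hi : 1 ≤ i ∧ i ≤ n - 1
  · by_cases hj : 1 ≤ j ∧ j ≤ n - 1
    · have h : e n i * s n j = s n j * e n i := by
        rcases eq_or_ne i j with rfl | hij
        · simpa only [map_mul, mk_wS, mk_wE] using mk_eq_of_rel (TPMRel.eta_sig i hi)
        · simpa only [map_mul, mk_wS, mk_wE] using
            mk_eq_of_rel (TPMRel.eta_sig_far i j hi hj (by omega))
      exact h.symm
    · rw [s_eq_one hj]; exact Commute.one_left _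
  · rw [e_eq_one hi]; exact Commute.one_right _

theorem commute_s_s_of_far {i j : ℕ} (hij : i + 2 ≤ j ∨ j + 2 ≤ i) : Commute (s n i) (s n j) := by
  by_cases hi : 1 ≤ i ∧ i ≤ n - 1
  · by_cases hj : 1 ≤ j ∧ j ≤ n - 1
    · simpa only [map_mul, mk_wS, commute_iff_eq] using mk_eq_of_rel (TPMRel.sig_comm i j hi hj hij)
    · rw [s_eq_one hj]; exact Commute.one_right _
  · rw [s_eq_one hi]; exact Commute.one_left _

theorem semiconjBy_s_mul_s_succ_s {i : ℕ} (hi : 1 ≤ i) (hin : i + 2 ≤ n) :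
    SemiconjBy (s n i * s n (i + 1)) (s n i) (s n (i + 1)) := by
  simpa only [map_mul, mk_wS, SemiconjBy, mul_assoc] using
    mk_eq_of_rel (TPMRel.braid (n := n) i ⟨hi, by omega⟩)

theorem semiconjBy_s_succ_mul_s_e_succ {i : ℕ} (hi : 1 ≤ i) (hin : i + 2 ≤ n) :
    SemiconjBy (s n (i + 1) * s n i) (e n (i + 1)) (e n i) := by
  have h := mk_eq_of_rel (TPMRel.eta_slide_pos (n := n) i (i + 1) ⟨hi, by omega⟩
    ⟨by omega, by omega⟩ (Or.inl rfl))
  simp only [map_mul, mk_wS, mk_wE] at h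
  simpa only [SemiconjBy, mul_assoc] using h.symm

theorem semiconjBy_s_succ_mul_sInv_e_succ {i : ℕ} (hi : 1 ≤ i) (hin : i + 2 ≤ n) :
    SemiconjBy (s n (i + 1) * sInv n i) (e n (i + 1)) (e n i) := by
  have h := mk_eq_of_rel (TPMRel.eta_slide_neg (n := n) i (i + 1) ⟨hi, by omega⟩
    ⟨by omega, by omega⟩ (Or.inl rfl))
  simp only [map_mul, mk_wS, mk_wSI, mk_wE] at h
  simpa only [SemiconjBy, mul_assoc] using h.symm

theorem semiconjBy_s_mul_s_succ_e {i : ℕ} (hi : 1 ≤ i) (hin : i + 2 ≤ n) :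
    SemiconjBy (s n i * s n (i + 1)) (e n i) (e n (i + 1)) := by
  have h := mk_eq_of_rel (TPMRel.eta_slide_pos (n := n) (i + 1) i ⟨by omega, by omega⟩
    ⟨hi, by omega⟩ (Or.inr rfl))
  simp only [map_mul, mk_wS, mk_wE] at h
  simpa only [SemiconjBy, mul_assoc] using h.symm

theorem commute_s_mul_s_e_succ {i : ℕ} (hi : 1 ≤ i) (hin : i + 2 ≤ n) :
    Commute (s n i * s n i) (e n (i + 1)) := by
  have hB : SemiconjBy (↑(sUnit n (i + 1) * (sUnit n i)⁻¹)) (e n (i + 1)) (e n i) :=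
    semiconjBy_s_succ_mul_sInv_e_succ hi hin
  have h := hB.units_inv_symm_left.mul_left (semiconjBy_s_succ_mul_s_e_succ hi hin)
  simp only [mul_inv_rev, inv_inv, Units.val_mul, val_sUnit, val_inv_sUnit, mul_assoc,
    sInv_mul_s_cancel_left] at h
  exact h

theorem genTie_eq_e {a b : ℕ} (h : b ≤ a + 1) : genTie n a b = e n (b - 1) := by
  simp [genTie, show b - 1 - a = 0 by omega]

@[simp] theorem genTie_self_add_one (a : ℕ) : genTie n a (a + 1) = e n a :=
  genTie_eq_e le_rfl

theorem semiconjBy_s_genTie_succ_left {a b : ℕ} (h : a + 1 < b) :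
    SemiconjBy (s n a) (genTie n (a + 1) b) (genTie n a b) := by
  have hlen : b - 1 - a = b - 1 - (a + 1) + 1 := by omega
  simp only [SemiconjBy, genTie, hlen, List.range'_succ, List.map_cons, List.prod_cons,
    List.reverse_cons, List.map_append, List.prod_append, List.map_nil, List.prod_nil, mul_one,
    mul_assoc, sInv_mul_s]

theorem isIdempotentElem_genTie (a b : ℕ) : IsIdempotentElem (genTie n a b) := by
  induction hd : b - a generalizing a with
  | zero => rw [genTie_eq_e (by omega)]; exact isIdempotentElem_e _
  | succ d ih =>
    rcases Nat.lt_or_ge (a + 1) b with h | h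
    · exact IsIdempotentElem.conj_units (u := sUnit n a) (semiconjBy_s_genTie_succ_left h)
        (ih (a + 1) (by omega))
    · rw [genTie_eq_e h]; exact isIdempotentElem_e _

theorem semiconjBy_s_genTie_e_succ {i : ℕ} (hi : 1 ≤ i) (hin : i + 2 ≤ n) :
    SemiconjBy (s n i) (genTie n i (i + 2)) (e n (i + 1)) := by
  have h : SemiconjBy (s n i) (e n (i + 1)) (genTie n i (i + 2)) := by
    simpa using semiconjBy_s_genTie_succ_left (n := n) (a := i) (b := i + 2) (by omega)
  exact SemiconjBy.of_mul_left (b := sUnit n i) (commute_s_mul_s_e_succ hi hin) h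

theorem semiconjBy_s_succ_e_genTie {i : ℕ} (hi : 1 ≤ i) (hin : i + 2 ≤ n) :
    SemiconjBy (s n (i + 1)) (e n i) (genTie n i (i + 2)) := by
  have h : SemiconjBy (↑(sUnit n i)) (genTie n i (i + 2)) (e n (i + 1)) :=
    semiconjBy_s_genTie_e_succ hi hin
  have h' := h.units_inv_symm_left.mul_left (semiconjBy_s_mul_s_succ_e hi hin)
  simp only [val_inv_sUnit, sInv_mul_s_cancel_left] at h'
  exact h'

theorem semiconjBy_s_succ_genTie_e {i : ℕ} (hi : 1 ≤ i) (hin : i + 2 ≤ n) :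
    SemiconjBy (s n (i + 1)) (genTie n i (i + 2)) (e n i) := by
  have h : SemiconjBy (s n i) (e n (i + 1)) (genTie n i (i + 2)) := by
    simpa using semiconjBy_s_genTie_succ_left (n := n) (a := i) (b := i + 2) (by omega)
  exact SemiconjBy.of_mul_left (b := sUnit n i) (semiconjBy_s_succ_mul_s_e_succ hi hin) h

theorem semiconjBy_s_genTie_self_right {a b : ℕ} (ha : 1 ≤ a) (hab : a < b) (hbn : b + 1 ≤ n) :
    SemiconjBy (s n b) (genTie n a b) (genTie n a (b + 1)) := by
  induction hd : b - a generalizing a with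
  | zero => omega
  | succ d ih =>
    rcases Nat.lt_or_ge (a + 1) b with h | h
    · exact SemiconjBy.conj_units (u := sUnit n a) (commute_s_s_of_far (by omega))
        (semiconjBy_s_genTie_succ_left h) (semiconjBy_s_genTie_succ_left (by omega))
        (ih (by omega) h (by omega))
    · obtain rfl : b = a + 1 := by omega
      simpa using semiconjBy_s_succ_e_genTie ha hbn

theorem semiconjBy_s_genTie_self_left {a b : ℕ} (ha : 1 ≤ a) (hab : a + 2 ≤ b) (hbn : b ≤ n) :
    SemiconjBy (s n a) (genTie n a b) (genTie n (a + 1) b) := by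
  induction b, hab using Nat.le_induction with
  | base => simpa using semiconjBy_s_genTie_e_succ ha hbn
  | succ b hab ih =>
    exact SemiconjBy.conj_units (u := sUnit n b) (commute_s_s_of_far (by omega))
      (semiconjBy_s_genTie_self_right ha (by omega) hbn)
      (semiconjBy_s_genTie_self_right (by omega) hab hbn)
      (ih (by omega))

theorem commute_s_genTie_of_add_two_le {k a b : ℕ} (hka : k + 2 ≤ a) (hab : a < b) :
    Commute (s n k) (genTie n a b) := by
  induction hd : b - a generalizing a with
  | zero => omega
  | succ d ih =>
    rcases Nat.lt_or_ge (a + 1) b with h | h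
    · exact Commute.conj_units (u := sUnit n a) (commute_s_s_of_far (by omega))
        (semiconjBy_s_genTie_succ_left h) (ih (by omega) h (by omega))
    · rw [genTie_eq_e h]
      exact commute_s_e (by omega) (by omega)

theorem commute_s_succ_genTie {a b : ℕ} (ha : 1 ≤ a) (hab : a + 2 < b) (hbn : b ≤ n) :
    Commute (s n (a + 1)) (genTie n a b) := by
  have h : SemiconjBy (↑(sUnit n a * sUnit n (a + 1))) (genTie n (a + 2) b) (genTie n a b) :=
    (semiconjBy_s_genTie_succ_left (by omega)).mul_left (semiconjBy_s_genTie_succ_left hab)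
  exact SemiconjBy.conj_units (semiconjBy_s_mul_s_succ_s ha (by omega)) h h
    (commute_s_genTie_of_add_two_le le_rfl (by omega))

theorem semiconjBy_s_genTie_swap {k a b : ℕ} (hkn : k + 1 ≤ n) (ha : 1 ≤ a)
    (hab : a < b) (hbn : b ≤ n) (hne : a ≠ k ∨ b ≠ k + 1) :
    SemiconjBy (s n k)
      (genTie n a b) (genTie n (Equiv.swap k (k + 1) a) (Equiv.swap k (k + 1) b)) := by
  have hb' := swap_add_one_apply_cases k b
  generalize Equiv.swap k (k + 1) b = b' at *
  induction hd : b - a generalizing a with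
  | zero => omega
  | succ d ih =>
    have ha' := swap_add_one_apply_cases k a
    generalize Equiv.swap k (k + 1) a = a' at *
    rcases (by omega : a = k + 1 ∨ a = k ∨ a + 1 = k ∨ k + 2 ≤ a ∨ a + 2 ≤ k) with
      rfl | rfl | rfl | h | h
    · convert semiconjBy_s_genTie_succ_left (n := n) hab using 2 <;> omega
    · convert semiconjBy_s_genTie_self_left (n := n) ha (by omega) hbn using 2 <;> omega
    · rcases (by omega : b = a + 1 ∨ b = a + 2 ∨ a + 2 < b) with rfl | rfl | hb
      · rw [genTie_self_add_one]
        convert semiconjBy_s_succ_e_genTie (n := n) ha hkn using 2 <;> omega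
      · obtain ⟨rfl, rfl⟩ : a = a' ∧ b' = a + 1 := by omega
        simpa using semiconjBy_s_succ_genTie_e (n := n) ha hkn
      · convert (commute_s_succ_genTie (n := n) ha hb hbn).semiconjBy using 2 <;> omega
    · convert (commute_s_genTie_of_add_two_le (n := n) h hab).semiconjBy using 2 <;> omega
    · obtain rfl : a = a' := by omega
      rcases Nat.lt_or_ge (a + 1) b with hb | hb
      · have ih' := ih (by omega) hb (by omega) (by omega)
        rw [Equiv.swap_apply_of_ne_of_ne (by omega) (by omega)] at ih'
        exact SemiconjBy.conj_units (u := sUnit n a) (commute_s_s_of_far (by omega))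
          (semiconjBy_s_genTie_succ_left hb) (semiconjBy_s_genTie_succ_left (by omega)) ih'
      · obtain ⟨rfl, rfl⟩ : b = a + 1 ∧ b' = a + 1 := by omega
        simpa using (commute_s_e (n := n) (i := a) (j := k) (by omega) (by omega)).semiconjBy

theorem commute_e_genTie {m c d : ℕ} (hc : 1 ≤ c) (hcd : c < d) (hdn : d ≤ n) :
    Commute (e n m) (genTie n c d) := by
  induction hg : d - c generalizing c d with
  | zero => omega
  | succ g ih =>
    rcases (by omega : d = c + 1 ∨ c + 1 < d) with rfl | hcd
    · rw [genTie_self_add_one]; exact commute_e_e m c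
    by_cases hleft : c ≠ m + 1 ∧ m ≠ c + 1
    · exact Commute.conj_units (u := sUnit n c) (commute_s_e hleft.1 hleft.2)
        (semiconjBy_s_genTie_succ_left hcd) (ih (by omega) hcd hdn (by omega))
    obtain ⟨d, rfl⟩ : ∃ d', d = d' + 1 := ⟨d - 1, by omega⟩
    by_cases hright : d ≠ m + 1 ∧ m ≠ d + 1
    · exact Commute.conj_units (u := sUnit n d) (commute_s_e hright.1 hright.2)
        (semiconjBy_s_genTie_self_right hc (by omega) hdn) (ih hc (by omega) (by omega) (by omega))
    obtain ⟨rfl, rfl⟩ : m = c + 1 ∧ d = c + 2 := by omega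
    have hcross : Commute (genTie n (c + 1) (c + 3)) (genTie n c (c + 2)) := by
      have he : SemiconjBy (s n (c + 1)) (e n (c + 2)) (genTie n (c + 1) (c + 3)) := by
        simpa using semiconjBy_s_genTie_succ_left (n := n) (a := c + 1) (b := c + 3) (by omega)
      exact Commute.conj_units (u := sUnit n (c + 1)) he (semiconjBy_s_succ_e_genTie hc (by omega))
        (commute_e_e _ _)
    exact Commute.conj_units (u := sUnit n (c + 2)) (semiconjBy_s_succ_genTie_e (by omega) hdn)
      (semiconjBy_s_genTie_self_right hc (by omega) hdn) hcross

theorem commute_genTie_genTie {a b c d : ℕ} (ha : 1 ≤ a) (hab : a < b) (hbn : b ≤ n)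
    (hc : 1 ≤ c) (hcd : c < d) (hdn : d ≤ n) : Commute (genTie n a b) (genTie n c d) := by
  induction hg : b - a generalizing a c d with
  | zero => omega
  | succ g ih =>
    rcases (by omega : b = a + 1 ∨ a + 1 < b) with rfl | hab
    · rw [genTie_self_add_one]; exact commute_e_genTie hc hcd hdn
    by_cases hcd' : c = a ∧ d = a + 1
    · obtain ⟨rfl, rfl⟩ := hcd'
      rw [genTie_self_add_one]; exact (commute_e_genTie ha (by omega) hbn).symm
    have hc' := swap_add_one_apply_cases a c
    have hd' := swap_add_one_apply_cases a d
    have hτ := semiconjBy_s_genTie_swap (n := n) (k := a) (a := Equiv.swap a (a + 1) c)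
      (b := Equiv.swap a (a + 1) d) (by omega) (by omega) (by omega) (by omega) (by omega)
    rw [Equiv.swap_apply_self, Equiv.swap_apply_self] at hτ
    exact Commute.conj_units (u := sUnit n a) (semiconjBy_s_genTie_succ_left hab) hτ
      (ih (by omega) hab (by omega) (by omega) (by omega) (by omega))

end TPM

theorem tpm_genTie_idem_comm_general (n : ℕ) (i j k l : ℕ)
    (hi : 1 ≤ i) (hij : i < j) (hj : j ≤ n)
    (hk : 1 ≤ k) (hkl : k < l) (hl : l ≤ n) :
    TPM.genTie n i j * TPM.genTie n i j = TPM.genTie n i j ∧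
    TPM.genTie n i j * TPM.genTie n k l = TPM.genTie n k l * TPM.genTie n i j :=
  ⟨TPM.isIdempotentElem_genTie i j, TPM.commute_genTie_genTie hi hij hj hk hkl hl⟩

/-- **Generalized ties in `TPM n` are idempotent and pairwise commute**: for every n ≥ 2
and all indices 1 ≤ i < j ≤ n and 1 ≤ k < l ≤ n, η_{i,j} η_{i,j} = η_{i,j} and
η_{i,j} η_{k,l} = η_{k,l} η_{i,j} hold in the tied pseudo braid monoid `TPM n`. -/
theorem tpm_genTie_idem_comm (n : ℕ) (hn : 2 ≤ n) (i j k l : ℕ)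
    (hi : 1 ≤ i) (hij : i < j) (hj : j ≤ n)
    (hk : 1 ≤ k) (hkl : k < l) (hl : l ≤ n) :
    TPM.genTie n i j * TPM.genTie n i j = TPM.genTie n i j ∧
    TPM.genTie n i j * TPM.genTie n k l = TPM.genTie n k l * TPM.genTie n i j :=
  tpm_genTie_idem_comm_general n i j k l hi hij hj hk hkl hl
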